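/- In a Hom-group (G, α), left cancellation holds: if g h₁ = g h₂ then h₁ = h₂. Similarly right cancellation holds: if h₁ g = h₂ g then h₁ = h₂. -/

import Mathlib

/-- A Hom-group: a set `G` with a bijective twisting map `α` (given as an `Equiv`),
a binary operation `mul`, and a distinguished unit `one`, satisfying Hom-associativity,
multiplicativity of `α`, Hom-unitality, and existence of two-sided inverses. -/
structure HomGroup (G : Type*) where
  mul : G → G → G
  one : G
  α : G ≃ G
  hom_assoc : ∀ g h k, mul (α g) (mul h k) = mul (mul g h) (α k)
  α_mul : ∀ g k, α (mul g k) = mul (α g) (α k)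
  mul_one : ∀ g, mul g one = α g
  one_mul : ∀ g, mul one g = α g
  α_one : α one = one
  inv : G → G
  mul_inv : ∀ g, mul g (inv g) = one
  inv_mul : ∀ g, mul (inv g) g = one

namespace HomGroup

variable {G : Type*} (H : HomGroup G)

theorem α_inv_mul_mul (g h : G) : H.mul (H.α (H.inv g)) (H.mul g h) = H.α (H.α h) := by
  rw [H.hom_assoc, H.inv_mul, H.one_mul]

theorem mul_mul_α_inv (g h : G) : H.mul (H.mul h g) (H.α (H.inv g)) = H.α (H.α h) := by
  rw [← H.hom_assoc, H.mul_inv, H.mul_one]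

theorem α_α_injective : Function.Injective (fun h => H.α (H.α h)) :=
  H.α.injective.comp H.α.injective

theorem mul_right_injective (g : G) : Function.Injective (H.mul g) := by
  refine Function.Injective.of_comp (f := H.mul (H.α (H.inv g))) ?_
  simpa only [Function.comp_def, α_inv_mul_mul] using H.α_α_injective

theorem mul_left_injective (g : G) : Function.Injective (fun h => H.mul h g) := by
  refine Function.Injective.of_comp (f := fun k => H.mul k (H.α (H.inv g))) ?_
  simpa only [Function.comp_def, mul_mul_α_inv] using H.α_α_injective

end HomGroup

/-- Left and right cancellation in a Hom-group. -/
theorem homGroup_cancel {G : Type*} (H : HomGroup G) (g : G) :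
    (∀ h₁ h₂, H.mul g h₁ = H.mul g h₂ → h₁ = h₂) ∧
    (∀ h₁ h₂, H.mul h₁ g = H.mul h₂ g → h₁ = h₂) :=
  ⟨fun _ _ => (H.mul_right_injective g ·), fun _ _ => (H.mul_left_injective g ·)⟩
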